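/- arXiv:1105.4404 — 3 statements merged into one kernel-verified Lean document; each statement's English description precedes it below -/
import Mathlib

section
/- Let G₁, G₂: ℝ → ℝ be strictly increasing continuous maps satisfying Gᵢ(x + 1/2) = Gᵢ(x) + 1/2 for all x. Then |τ(G₂ ∘ G₁) - τ(G₂) - τ(G₁)| ≤ 1/2. -/
/-!
Conjugating by `x ↦ p * x`, a monotone map commuting with translation by `p > 0` becomes a
lift of a degree-one circle map whose translation number is divided by `p`. For such lifts the
translation number is a quasimorphism of defect at most `1`: if `n` is the integer with
`τ f < n ≤ τ f + 1`, then `f * g` lies below the commuting product `(· + n) * g`, whose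
translation number is `n + τ g`, and symmetrically from below. Scaling back gives defect `≤ p`.
-/

def HasTransNum (G : ℝ → ℝ) (τ : ℝ) : Prop :=
  Filter.Tendsto (fun n : ℕ => (G^[n] 0 - 0) / n) Filter.atTop (nhds τ)

namespace CircleDeg1Lift

local notation "τ" => translationNumber

theorem translationNumber_translate_int_mul (n : ℤ) (g : CircleDeg1Lift) :
    τ (↑(translate (Multiplicative.ofAdd (n : ℝ))) * g) = n + τ g := by
  have hcomm : Commute (↑(translate (Multiplicative.ofAdd (n : ℝ))) : CircleDeg1Lift) g :=
    commute_iff_commute.2 fun x => by simp [translate_apply, g.map_int_add]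
  rw [translationNumber_mul_of_commute hcomm, translationNumber_translate]

theorem translationNumber_mul_le (f g : CircleDeg1Lift) : τ (f * g) ≤ τ f + τ g + 1 := by
  set n : ℤ := ⌊τ f⌋ + 1
  have hle : f * g ≤ ↑(translate (Multiplicative.ofAdd (n : ℝ))) * g := fun x => by
    have := f.map_lt_add_floor_translationNumber_add_one (g x)
    simp only [mul_apply, translate_apply, n, Int.cast_add, Int.cast_one]
    linarith
  have hτ := translationNumber_mono hle
  rw [translationNumber_translate_int_mul] at hτ
  have hn : (n : ℝ) ≤ τ f + 1 := by
    simp only [n, Int.cast_add, Int.cast_one, add_le_add_iff_right, Int.floor_le]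
  linarith

theorem le_translationNumber_mul (f g : CircleDeg1Lift) : τ f + τ g - 1 ≤ τ (f * g) := by
  set m : ℤ := ⌈τ f⌉ - 1
  have hm : (m : ℝ) < τ f := by
    simp only [m, Int.cast_sub, Int.cast_one, sub_lt_iff_lt_add, Int.ceil_lt_add_one]
  have hle : ↑(translate (Multiplicative.ofAdd (m : ℝ))) * g ≤ f * g := fun x => by
    have := f.lt_map_of_int_lt_translationNumber hm (g x)
    simp only [mul_apply, translate_apply]
    linarith
  have hτ := translationNumber_mono hle
  rw [translationNumber_translate_int_mul] at hτ
  have hm' : τ f - 1 ≤ m := by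
    simp only [m, Int.cast_sub, Int.cast_one, sub_le_sub_iff_right, Int.le_ceil]
  linarith

theorem abs_translationNumber_mul_sub_le_one (f g : CircleDeg1Lift) :
    |τ (f * g) - τ f - τ g| ≤ 1 :=
  abs_le.2 ⟨by linarith [le_translationNumber_mul f g],
    by linarith [translationNumber_mul_le f g]⟩

noncomputable def rescale (G : ℝ → ℝ) {p : ℝ} (hp : 0 < p) (hG : Monotone G)
    (hGp : ∀ x, G (x + p) = G x + p) : CircleDeg1Lift where
  toFun x := G (p * x) / p
  monotone' _ _ h :=
    div_le_div_of_nonneg_right (hG (mul_le_mul_of_nonneg_left h hp.le)) hp.le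
  map_add_one' x := by rw [mul_add_one, hGp, add_div, div_self hp.ne']

section rescale

variable (G : ℝ → ℝ) {p : ℝ} (hp : 0 < p) (hG : Monotone G)
  (hGp : ∀ x, G (x + p) = G x + p)

theorem rescale_apply (x : ℝ) : rescale G hp hG hGp x = G (p * x) / p := rfl

theorem rescale_iterate (n : ℕ) (x : ℝ) :
    (rescale G hp hG hGp)^[n] x = G^[n] (p * x) / p := by
  induction n with
  | zero => simp [hp.ne']
  | succ n ih =>
    rw [Function.iterate_succ_apply', Function.iterate_succ_apply', ih, rescale_apply,
      mul_div_cancel₀ _ hp.ne']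

theorem translationNumber_rescale {t : ℝ} (ht : HasTransNum G t) :
    τ (rescale G hp hG hGp) = t / p := by
  refine tendsto_nhds_unique (rescale G hp hG hGp).tendsto_translation_number₀ ?_
  convert ht.div_const p using 2 with n
  rw [coe_pow, rescale_iterate, mul_zero, sub_zero, div_right_comm]

end rescale

end CircleDeg1Lift

open CircleDeg1Lift in
theorem abs_transNum_comp_sub_le_of_map_add {p : ℝ} (hp : 0 < p) (G₁ G₂ : ℝ → ℝ)
    (h₁ : Monotone G₁) (h₁p : ∀ x, G₁ (x + p) = G₁ x + p)
    (h₂ : Monotone G₂) (h₂p : ∀ x, G₂ (x + p) = G₂ x + p) {a b c : ℝ}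
    (ha : HasTransNum (G₂ ∘ G₁) a) (hb : HasTransNum G₂ b) (hc : HasTransNum G₁ c) :
    |a - b - c| ≤ p := by
  have hp' : ∀ x, (G₂ ∘ G₁) (x + p) = (G₂ ∘ G₁) x + p := fun x => by
    simp only [Function.comp_apply, h₁p, h₂p]
  set F₁ := rescale G₁ hp h₁ h₁p
  set F₂ := rescale G₂ hp h₂ h₂p
  have hcomp : rescale (G₂ ∘ G₁) hp (h₂.comp h₁) hp' = F₂ * F₁ := ext fun x => by
    simp only [F₁, F₂, mul_apply, rescale_apply, Function.comp_apply,
      mul_div_cancel₀ _ hp.ne']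
  have hdefect := abs_translationNumber_mul_sub_le_one F₂ F₁
  rwa [← hcomp, translationNumber_rescale _ _ _ _ ha, translationNumber_rescale _ _ _ _ hb,
    translationNumber_rescale _ _ _ _ hc, ← sub_div, ← sub_div, abs_div, abs_of_pos hp,
    div_le_one hp] at hdefect

theorem transNum_quasimorphism_half_general (G₁ G₂ : ℝ → ℝ)
    (h₁mono : StrictMono G₁)
    (h₁half : ∀ x, G₁ (x + 1/2) = G₁ x + 1/2)
    (h₂mono : StrictMono G₂)
    (h₂half : ∀ x, G₂ (x + 1/2) = G₂ x + 1/2)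
    (a b c : ℝ) (ha : HasTransNum (G₂ ∘ G₁) a) (hb : HasTransNum G₂ b)
    (hc : HasTransNum G₁ c) :
    |a - b - c| ≤ 1/2 :=
  abs_transNum_comp_sub_le_of_map_add one_half_pos G₁ G₂ h₁mono.monotone h₁half
    h₂mono.monotone h₂half ha hb hc

/-- For lifts commuting with the half-shift (lifts of circle maps coming from
`SL(2,ℝ)`), the translation number quasimorphism has defect at most `1/2`. -/
theorem transNum_quasimorphism_half (G₁ G₂ : ℝ → ℝ)
    (h₁mono : StrictMono G₁) (h₁cont : Continuous G₁)
    (h₁half : ∀ x, G₁ (x + 1/2) = G₁ x + 1/2)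
    (h₂mono : StrictMono G₂) (h₂cont : Continuous G₂)
    (h₂half : ∀ x, G₂ (x + 1/2) = G₂ x + 1/2)
    (a b c : ℝ) (ha : HasTransNum (G₂ ∘ G₁) a) (hb : HasTransNum G₂ b)
    (hc : HasTransNum G₁ c) :
    |a - b - c| ≤ 1/2 :=
  transNum_quasimorphism_half_general G₁ G₂ h₁mono h₁half h₂mono h₂half a b c ha hb hc
end

section
/- Let G, H: ℝ → ℝ be strictly increasing continuous maps satisfying G(x+1/2) = G(x)+1/2 and H(x+1/2) = H(x)+1/2 for all x. Then the minimum displacements m(G) = min_x (G(x)-x) and m(H⁻¹∘G∘H) = min_x (H⁻¹(G(H(x)))-x) lie in the same closed half-unit interval: for every integer n, n/2 ≤ m(G) if and only if n/2 ≤ m(H⁻¹∘G∘H), and m(G) ≤ n/2 if and only if m(H⁻¹∘G∘H) ≤ n/2. -/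
/-!
A lift `H` commuting with translation by `1/2` commutes with translation by `n/2` for every
integer `n`, so `x + n/2 ≤ H⁻¹ (G (H x))` is equivalent to `H x + n/2 ≤ G (H x)`, and likewise
with the inequality reversed. Since `H` is a bijection of `ℝ`, the statements "for all `x`" and
"for some `x`" therefore transfer between `G` and its conjugate. The displacements are continuous
and `1/2`-periodic, so their infima are attained minima; this turns `n/2 ≤ m` into a "for all"
statement and `m ≤ n/2` into a "for some" statement.
-/

open Function Set

section Displacement

variable {α : Type*} [AddCommGroup α] {F : α → α} {c : α}

theorem periodic_sub_self_of_map_add (h : ∀ x, F (x + c) = F x + c) :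
    Periodic (fun x => F x - x) c :=
  fun x => by simp only [h]; abel

theorem map_add_zsmul_of_map_add (h : ∀ x, F (x + c) = F x + c) (n : ℤ) (x : α) :
    F (x + n • c) = F x + n • c := by
  have hp := (periodic_sub_self_of_map_add h).zsmul n x
  rw [sub_eq_iff_eq_add] at hp
  rw [hp]
  abel

end Displacement

theorem isCompact_range_sub_self_of_map_add {F : ℝ → ℝ} {c : ℝ} (hc : c ≠ 0)
    (hF : Continuous F) (h : ∀ x, F (x + c) = F x + c) :
    IsCompact (range fun x => F x - x) :=
  (periodic_sub_self_of_map_add h).compact_of_continuous hc (hF.sub continuous_id)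

theorem ciInf_le_iff_of_isCompact_range {ι α : Type*} [Nonempty ι]
    [ConditionallyCompleteLinearOrder α] [TopologicalSpace α] [ClosedIicTopology α]
    {f : ι → α} (hf : IsCompact (range f)) {a : α} :
    ⨅ i, f i ≤ a ↔ ∃ i, f i ≤ a := by
  refine ⟨fun ha => ?_, fun ⟨i, hi⟩ => (ciInf_le hf.bddBelow i).trans hi⟩
  obtain ⟨i, hi⟩ := hf.sInf_mem (range_nonempty f)
  exact ⟨i, hi ▸ ha⟩

namespace OrderIso

section Conjugation

variable {α : Type*} [Preorder α] [Add α] (e : α ≃o α) {c : α}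

theorem forall_add_le_conj_iff (he : ∀ x, e (x + c) = e x + c) (G : α → α) :
    (∀ x, x + c ≤ e.symm (G (e x))) ↔ ∀ y, y + c ≤ G y := by
  simp_rw [e.le_symm_apply, he]
  exact (e.surjective.forall (p := fun y => y + c ≤ G y)).symm

theorem exists_conj_le_add_iff (he : ∀ x, e (x + c) = e x + c) (G : α → α) :
    (∃ x, e.symm (G (e x)) ≤ x + c) ↔ ∃ y, G y ≤ y + c := by
  simp_rw [e.symm_apply_le, he]
  exact (e.surjective.exists (p := fun y => G y ≤ y + c)).symm

end Conjugation

theorem min_displacement_conj_iff (e : ℝ ≃o ℝ) {c : ℝ} (hc : c ≠ 0)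
    (he : ∀ x, e (x + c) = e x + c) {G : ℝ → ℝ} (hGcont : Continuous G)
    (hGadd : ∀ x, G (x + c) = G x + c) (n : ℤ) :
    (n • c ≤ ⨅ x, G x - x ↔ n • c ≤ ⨅ x, e.symm (G (e x)) - x) ∧
      (⨅ x, G x - x ≤ n • c ↔ ⨅ x, e.symm (G (e x)) - x ≤ n • c) := by
  have hsymm : ∀ y, e.symm (y + c) = e.symm y + c :=
    Semiconj.inverse_left (ga := (· + c)) (gb := (· + c)) he
      e.symm_apply_apply e.apply_symm_apply
  have hconj : Continuous fun x => e.symm (G (e x)) :=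
    e.symm.continuous.comp (hGcont.comp e.continuous)
  have hconjc : ∀ x, e.symm (G (e (x + c))) = e.symm (G (e x)) + c := fun x => by
    rw [he, hGadd, hsymm]
  have hf := isCompact_range_sub_self_of_map_add hc hGcont hGadd
  have hg := isCompact_range_sub_self_of_map_add hc hconj hconjc
  rw [le_ciInf_iff hf.bddBelow, le_ciInf_iff hg.bddBelow, ciInf_le_iff_of_isCompact_range hf,
    ciInf_le_iff_of_isCompact_range hg]
  simp_rw [le_sub_iff_add_le', sub_le_iff_le_add']
  have hen := map_add_zsmul_of_map_add he n
  exact ⟨(e.forall_add_le_conj_iff hen G).symm, (e.exists_conj_le_add_iff hen G).symm⟩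

end OrderIso

theorem min_displacement_conj_same_half_interval_general (G H Hinv : ℝ → ℝ)
    (hGcont : Continuous G)
    (hGhalf : ∀ x, G (x + 1/2) = G x + 1/2)
    (hHmono : StrictMono H)
    (hHhalf : ∀ x, H (x + 1/2) = H x + 1/2)
    (hinvR : Function.RightInverse Hinv H) :
    ∀ n : ℤ,
      (((n : ℝ) / 2 ≤ ⨅ x : ℝ, G x - x) ↔
        ((n : ℝ) / 2 ≤ ⨅ x : ℝ, Hinv (G (H x)) - x)) ∧
      (((⨅ x : ℝ, G x - x) ≤ (n : ℝ) / 2) ↔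
        ((⨅ x : ℝ, Hinv (G (H x)) - x) ≤ (n : ℝ) / 2)) := by
  intro n
  let e : ℝ ≃o ℝ := hHmono.orderIsoOfSurjective H hinvR.surjective
  have hHinv : Hinv = e.symm := funext fun y => (e.symm_apply_eq.2 (hinvR y).symm).symm
  have hn : (n : ℝ) / 2 = n • (1 / 2 : ℝ) := by rw [zsmul_eq_mul]; ring
  rw [hHinv, hn]
  exact e.min_displacement_conj_iff (by norm_num) hHhalf hGcont hGhalf n

/-- The minimum displacements of two conjugate lifts commuting with the half-shift
lie in the same closed half-unit interval. -/
theorem min_displacement_conj_same_half_interval (G H Hinv : ℝ → ℝ)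
    (hGmono : StrictMono G) (hGcont : Continuous G)
    (hGhalf : ∀ x, G (x + 1/2) = G x + 1/2)
    (hHmono : StrictMono H) (hHcont : Continuous H)
    (hHhalf : ∀ x, H (x + 1/2) = H x + 1/2)
    (hinvL : Function.LeftInverse Hinv H) (hinvR : Function.RightInverse Hinv H) :
    ∀ n : ℤ,
      (((n : ℝ) / 2 ≤ ⨅ x : ℝ, G x - x) ↔
        ((n : ℝ) / 2 ≤ ⨅ x : ℝ, Hinv (G (H x)) - x)) ∧
      (((⨅ x : ℝ, G x - x) ≤ (n : ℝ) / 2) ↔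
        ((⨅ x : ℝ, Hinv (G (H x)) - x) ≤ (n : ℝ) / 2)) :=
  min_displacement_conj_same_half_interval_general G H Hinv hGcont hGhalf hHmono hHhalf hinvR
end

section
/- Let J be a q×q periodic Jacobi matrix (q ≥ 3) with diagonal entries α₀,…,α_{q-1}, sub/super-diagonal entries β₀,…,β_{q-2} < 0 and corner entries β_{q-1} < 0, and let M(λ) be the associated monodromy matrix, the product of the q transfer matrices [[0,1],[-β_{i-1}/β_i, (λ-α_i)/β_i]]. Then det(J - λI) = (-1)^q · β₀β₁⋯β_{q-1} · (tr M(λ) - 2) for all λ ∈ ℝ (the Hill formula). -/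
/-!
Write `d k = λ - α k` and `e k = -β k`, and let `Kₙ` be the continuant, the determinant of the
`n × n` Jacobi block with diagonal `d` and off-diagonal `e`. Splitting off the two corner entries
of `λ - J` by multilinearity in the first and last rows gives
`det (λ - J) = K_q - β_{q-1}² K'_{q-2} - 2 ∏ β`, where `K'` is the continuant of the shifted
sequences. On the transfer side, `β_i T_i = V_i W_{i-1}` with `V_i = [[0, β_i], [-1, d_i]]` and
`W_j = diag(β_j, 1)`; cycling the `W`'s around the trace turns `(∏ β) tr M` into the trace of a
product of the continuant recurrence matrices `W_i V_i = [[0, β_i²], [-1, d_i]]`, whose diagonal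
entries are `-β_{q-1}² K'_{q-2}` and `K_q`.
-/

open Finset Matrix

section DescProd

variable {G : Type*} [Monoid G]

def descProd (F : ℕ → G) : ℕ → G
  | 0 => 1
  | n + 1 => F n * descProd F n

@[simp] lemma descProd_zero (F : ℕ → G) : descProd F 0 = 1 := rfl

lemma descProd_succ (F : ℕ → G) (n : ℕ) : descProd F (n + 1) = F n * descProd F n := rfl

lemma descProd_succ' (F : ℕ → G) (n : ℕ) :
    descProd F (n + 1) = descProd (fun k => F (k + 1)) n * F 0 := by
  induction n with
  | zero => simp [descProd_succ]
  | succ n ih => rw [descProd_succ, ih, descProd_succ, mul_assoc]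

lemma prod_reverse_ofFn_eq_descProd (F : ℕ → G) (n : ℕ) :
    (List.ofFn fun i : Fin n => F i).reverse.prod = descProd F n := by
  induction n with
  | zero => rfl
  | succ n ih =>
    simp only [List.ofFn_succ', List.concat_eq_append, List.reverse_append, List.reverse_singleton,
      List.singleton_append, List.prod_cons, Fin.val_castSucc, Fin.val_last, ih, descProd_succ]

lemma descProd_regroup (V W S : ℕ → G) (w : G) (h₀ : S 0 = V 0 * w)
    (hS : ∀ k, S (k + 1) = V (k + 1) * W k) (n : ℕ) :
    descProd S (n + 1) = V n * descProd (fun k => W k * V k) n * w := by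
  induction n with
  | zero => simp [descProd_succ, h₀]
  | succ n ih => rw [descProd_succ, hS, ih, descProd_succ]; simp only [mul_assoc]

end DescProd

lemma descProd_smul {R A : Type*} [CommSemiring R] [Semiring A] [Algebra R A]
    (c : ℕ → R) (F : ℕ → A) (n : ℕ) :
    descProd (fun k => c k • F k) n = (∏ k ∈ range n, c k) • descProd F n := by
  induction n with
  | zero => simp
  | succ n ih =>
    rw [descProd_succ, descProd_succ, ih, smul_mul_smul_comm, prod_range_succ, mul_comm]

lemma trace_descProd_regroup {ι R : Type*} [Fintype ι] [DecidableEq ι] [CommSemiring R]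
    (V W S : ℕ → Matrix ι ι R) (n : ℕ) (h₀ : S 0 = V 0 * W n)
    (hS : ∀ k, S (k + 1) = V (k + 1) * W k) :
    trace (descProd S (n + 1)) = trace (descProd (fun k => W k * V k) (n + 1)) := by
  rw [descProd_regroup V W S (W n) h₀ hS, trace_mul_cycle, descProd_succ, mul_assoc]

lemma Matrix.det_eq_of_row_eq_single {R : Type*} [CommRing R] {n : ℕ}
    (A : Matrix (Fin (n + 1)) (Fin (n + 1)) R) {i j : Fin (n + 1)} {c : R}
    (h : A i = Pi.single j c) :
    A.det = (-1) ^ (i + j : ℕ) * c * (A.submatrix i.succAbove j.succAbove).det := by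
  rw [det_succ_row A i, Fintype.sum_eq_single j fun k hk => by simp [h, hk], h, Pi.single_eq_same]

lemma Matrix.det_eq_of_col_eq_single {R : Type*} [CommRing R] {n : ℕ}
    (A : Matrix (Fin (n + 1)) (Fin (n + 1)) R) {i j : Fin (n + 1)} {c : R}
    (h : ∀ k, A k j = (Pi.single i c : Fin (n + 1) → R) k) :
    A.det = (-1) ^ (i + j : ℕ) * c * (A.submatrix i.succAbove j.succAbove).det := by
  rw [← det_transpose, Aᵀ.det_eq_of_row_eq_single (funext h), add_comm, ← det_transpose,
    transpose_submatrix, transpose_transpose]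

section Continuant

variable {R : Type*} [CommRing R] (d e : ℕ → R)

def jacobiMatrix (n : ℕ) : Matrix (Fin n) (Fin n) R :=
  of fun i j =>
    if (i : ℕ) = j then d i
    else if (j : ℕ) = i + 1 then e i
    else if (i : ℕ) = j + 1 then e j
    else 0

def continuant (n : ℕ) : R := (jacobiMatrix d e n).det

lemma jacobiMatrix_transpose (n : ℕ) : (jacobiMatrix d e n)ᵀ = jacobiMatrix d e n := by
  ext i j
  simp only [jacobiMatrix, transpose_apply, of_apply]
  split_ifs <;> first | rfl | omega | simp_all

lemma jacobiMatrix_submatrix_castSucc (n : ℕ) :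
    (jacobiMatrix d e (n + 1)).submatrix Fin.castSucc Fin.castSucc = jacobiMatrix d e n := by
  ext i j
  simp [jacobiMatrix]

lemma det_jacobiMatrix_submatrix_succ_castSucc (n : ℕ) :
    ((jacobiMatrix d e (n + 1)).submatrix Fin.succ Fin.castSucc).det = ∏ k ∈ range n, e k := by
  rw [det_of_isUpperTriangular, ← Fin.prod_univ_eq_prod_range]
  · refine prod_congr rfl fun i _ => ?_
    simp only [jacobiMatrix, submatrix_apply, of_apply, Fin.val_succ, Fin.val_castSucc]
    split_ifs <;> first | rfl | omega
  · intro i j hij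
    simp only [jacobiMatrix, submatrix_apply, of_apply, Fin.val_succ, Fin.val_castSucc]
    have : (j : ℕ) < i := hij
    split_ifs <;> first | rfl | omega

@[simp] lemma continuant_zero : continuant d e 0 = 1 := det_fin_zero

@[simp] lemma continuant_one : continuant d e 1 = d 0 := by simp [continuant, jacobiMatrix]

lemma continuant_succ_succ (n : ℕ) :
    continuant d e (n + 2) = d (n + 1) * continuant d e (n + 1) - e n ^ 2 * continuant d e n := by
  set A := jacobiMatrix d e (n + 2)
  have hlast : ∀ j : Fin n, A (Fin.last _) j.castSucc.castSucc = 0 := fun j => by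
    simp only [A, jacobiMatrix, of_apply, Fin.val_last, Fin.val_castSucc]
    split_ifs <;> first | rfl | omega
  have hcol : ∀ k, (A.submatrix (Fin.last _).succAbove (Fin.last n).castSucc.succAbove) k
      (Fin.last n) = (Pi.single (Fin.last n) (e n) : Fin (n + 1) → R) k := fun k => by
    rw [submatrix_apply, Fin.succAbove_castSucc_self, Fin.succAbove_last]
    simp only [A, jacobiMatrix, of_apply, Pi.single_apply, Fin.ext_iff, Fin.val_castSucc,
      Fin.val_succ, Fin.val_last]
    have := k.isLt
    split_ifs <;> first | omega | simp_all
  rw [continuant, det_succ_row A (Fin.last _), Fin.sum_univ_castSucc, Fin.sum_univ_castSucc,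
    sum_eq_zero fun j _ => by rw [hlast, mul_zero, zero_mul], zero_add,
    det_eq_of_col_eq_single _ hcol]
  have hminor : (A.submatrix (Fin.last _).succAbove (Fin.last n).castSucc.succAbove).submatrix
      (Fin.last n).succAbove (Fin.last n).succAbove = jacobiMatrix d e n := by
    ext i j
    simp [A, jacobiMatrix, Fin.succAbove_castSucc_of_lt _ _ (Fin.castSucc_lt_last j)]
  have hsub : A (Fin.last _) (Fin.last n).castSucc = e n := by
    simp only [A, jacobiMatrix, of_apply, Fin.val_last, Fin.val_castSucc]
    split_ifs <;> first | rfl | omega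
  have hdiag : A (Fin.last _) (Fin.last _) = d (n + 1) := by simp [A, jacobiMatrix]
  rw [hminor, Fin.succAbove_last, jacobiMatrix_submatrix_castSucc, hsub, hdiag]
  simp only [Fin.val_last, Fin.val_castSucc, Odd.neg_one_pow (⟨n, by ring⟩ : Odd (n + 1 + n)),
    Even.neg_one_pow (⟨n, rfl⟩ : Even (n + n)),
    Even.neg_one_pow (⟨n + 1, rfl⟩ : Even (n + 1 + (n + 1)))]
  rw [continuant, continuant]
  ring

lemma descProd_continuant_col (n : ℕ) :
    descProd (fun k => !![0, e k ^ 2; -1, d k]) (n + 1) 0 1 = e n ^ 2 * continuant d e n ∧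
      descProd (fun k => !![0, e k ^ 2; -1, d k]) (n + 1) 1 1 = continuant d e (n + 1) := by
  induction n with
  | zero => simp [descProd_succ]
  | succ n ih =>
    rw [descProd_succ, mul_apply, mul_apply, Fin.sum_univ_two, Fin.sum_univ_two, ih.1, ih.2,
      continuant_succ_succ]
    constructor
    · simp only [of_apply, cons_val', cons_val_zero, cons_val_one, cons_val_fin_one, zero_mul,
        zero_add]
    · simp only [of_apply, cons_val', cons_val_zero, cons_val_one, cons_val_fin_one, neg_mul,
        one_mul]
      ring

lemma trace_descProd_continuant (n : ℕ) :
    trace (descProd (fun k => !![0, e k ^ 2; -1, d k]) (n + 2)) =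
      continuant d e (n + 2) -
        e (n + 1) ^ 2 * continuant (fun k => d (k + 1)) (fun k => e (k + 1)) n := by
  rw [trace_fin_two, (descProd_continuant_col d e (n + 1)).2, descProd_succ', mul_apply,
    Fin.sum_univ_two, (descProd_continuant_col (fun k => d (k + 1)) (fun k => e (k + 1)) n).1]
  simp only [of_apply, cons_val', cons_val_zero, cons_val_one, cons_val_fin_one, mul_zero,
    mul_neg, mul_one, zero_add]
  ring

end Continuant

section Periodic

variable {R : Type*} [CommRing R] (d e : ℕ → R)

def periodicJacobiMatrix (q : ℕ) [NeZero q] : Matrix (Fin q) (Fin q) R :=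
  of fun i j => if i = j then d i else if j = i + 1 then e i else if i = j + 1 then e j else 0

lemma periodicJacobiMatrix_eq_updateRow (n : ℕ) :
    periodicJacobiMatrix d e (n + 3) =
      ((jacobiMatrix d e (n + 3)).updateRow 0
        (jacobiMatrix d e (n + 3) 0 + Pi.single (Fin.last _) (e (n + 2)))).updateRow (Fin.last _)
        (jacobiMatrix d e (n + 3) (Fin.last _) + Pi.single 0 (e (n + 2))) := by
  ext i j
  have := i.isLt
  have := j.isLt
  simp only [periodicJacobiMatrix, jacobiMatrix, updateRow_apply, of_apply, Pi.add_apply,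
    Pi.single_apply, Fin.ext_iff, Fin.val_add_one, Fin.val_last, Fin.val_zero]
  split_ifs <;> first | omega | simp_all

lemma det_jacobiMatrix_updateRow_zero (n : ℕ) (c : R) :
    ((jacobiMatrix d e (n + 1)).updateRow 0 (Pi.single (Fin.last n) c)).det =
      (-1) ^ n * c * ∏ k ∈ range n, e k := by
  rw [det_eq_of_row_eq_single _ (updateRow_self ..), submatrix_updateRow_succAbove,
    Fin.succAbove_zero, Fin.succAbove_last, det_jacobiMatrix_submatrix_succ_castSucc, Fin.val_zero,
    Fin.val_last, zero_add]

lemma det_jacobiMatrix_updateRow_last (n : ℕ) (c : R) :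
    ((jacobiMatrix d e (n + 1)).updateRow (Fin.last n) (Pi.single 0 c)).det =
      (-1) ^ n * c * ∏ k ∈ range n, e k := by
  rw [det_eq_of_row_eq_single _ (updateRow_self ..), submatrix_updateRow_succAbove,
    Fin.succAbove_zero, Fin.succAbove_last, ← jacobiMatrix_transpose d e, ← transpose_submatrix,
    det_transpose, det_jacobiMatrix_submatrix_succ_castSucc, Fin.val_zero, Fin.val_last, add_zero]

lemma det_jacobiMatrix_updateRow_last_updateRow_zero (n : ℕ) (c : R) :
    (((jacobiMatrix d e (n + 2)).updateRow (Fin.last _) (Pi.single 0 c)).updateRow 0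
        (Pi.single (Fin.last _) c)).det =
      -c ^ 2 * continuant (fun k => d (k + 1)) (fun k => e (k + 1)) n := by
  set N := ((jacobiMatrix d e (n + 2)).updateRow (Fin.last _) (Pi.single 0 c)).submatrix
    Fin.succ Fin.castSucc
  have hrow : N (Fin.last _) = Pi.single 0 c := by
    ext j
    simp only [N, submatrix_apply, Fin.succ_last, updateRow_self]
    simp [Pi.single_apply]
  have hminor : N.submatrix Fin.castSucc Fin.succ =
      jacobiMatrix (fun k => d (k + 1)) (fun k => e (k + 1)) n := by
    ext i j
    have := i.isLt
    simp only [N, jacobiMatrix, submatrix_apply, Fin.castSucc_succ, updateRow_apply,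
      Fin.ext_iff, Fin.val_succ, Fin.val_castSucc, Fin.val_last, of_apply,
      Nat.add_right_cancel_iff]
    rw [if_neg (by omega)]
  have hsign : (-1 : R) ^ (n + 1) * (-1) ^ n = -1 := by
    rw [← pow_add]
    exact Odd.neg_one_pow ⟨n, by ring⟩
  rw [det_eq_of_row_eq_single _ (updateRow_self ..), submatrix_updateRow_succAbove,
    Fin.succAbove_zero, Fin.succAbove_last, det_eq_of_row_eq_single N hrow, Fin.succAbove_zero,
    Fin.succAbove_last, hminor, ← continuant]
  simp only [Fin.val_zero, Fin.val_last, zero_add, add_zero]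
  linear_combination c ^ 2 * continuant (fun k => d (k + 1)) (fun k => e (k + 1)) n * hsign

lemma det_periodicJacobiMatrix (n : ℕ) :
    (periodicJacobiMatrix d e (n + 3)).det =
      continuant d e (n + 3) -
        e (n + 2) ^ 2 * continuant (fun k => d (k + 1)) (fun k => e (k + 1)) (n + 1) +
        2 * (-1) ^ n * ∏ k ∈ range (n + 3), e k := by
  rw [periodicJacobiMatrix_eq_updateRow]
  set T := jacobiMatrix d e (n + 3)
  set s₀ : Fin (n + 3) → R := Pi.single 0 (e (n + 2))
  set s₁ : Fin (n + 3) → R := Pi.single (Fin.last _) (e (n + 2))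
  have hlast : Fin.last (n + 2) ≠ 0 := Fin.last_pos.ne'
  have h₁ : (T.updateRow 0 (T 0 + s₁)).updateRow (Fin.last _) (T (Fin.last _)) =
      T.updateRow 0 (T 0 + s₁) := by
    rw [updateRow_comm _ hlast.symm, updateRow_eq_self]
  have h₂ : (T.updateRow 0 (T 0 + s₁)).updateRow (Fin.last _) s₀ =
      (T.updateRow (Fin.last _) s₀).updateRow 0 (T 0 + s₁) :=
    updateRow_comm _ hlast.symm _ _
  have h₃ : (T.updateRow (Fin.last _) s₀).updateRow 0 (T 0) =
      T.updateRow (Fin.last _) s₀ := by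
    rw [updateRow_comm _ hlast, updateRow_eq_self]
  rw [det_updateRow_add, h₁, h₂, det_updateRow_add, det_updateRow_add, updateRow_eq_self, h₃,
    det_jacobiMatrix_updateRow_zero, det_jacobiMatrix_updateRow_last,
    det_jacobiMatrix_updateRow_last_updateRow_zero, prod_range_succ e (n + 2),
    show T.det = continuant d e (n + 3) from rfl]
  ring

open Fin.NatCast in
lemma sub_smul_one_eq_neg_periodicJacobiMatrix (q : ℕ) [NeZero q] (α β : Fin q → R)
    (lam : R) :
    (of fun i j =>
        if i = j then α i else if j = i + 1 then β i else if i = j + 1 then β j else 0) -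
        lam • (1 : Matrix (Fin q) (Fin q) R) =
      -periodicJacobiMatrix (fun k => lam - α k) (fun k => -β k) q := by
  ext i j
  simp only [periodicJacobiMatrix, Matrix.sub_apply, Matrix.smul_apply, one_apply, of_apply,
    Matrix.neg_apply, smul_eq_mul, Fin.cast_val_eq_self]
  split_ifs <;> ring

end Periodic

section Monodromy

open Fin.NatCast

variable {K : Type*} [Field K]

def monodromy (n : ℕ) (α β : Fin (n + 1) → K) (lam : K) : Matrix (Fin 2) (Fin 2) K :=
  (List.ofFn fun i : Fin (n + 1) => !![0, 1; -β (i - 1) / β i, (lam - α i) / β i]).reverse.prod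

lemma prod_mul_trace_monodromy (n : ℕ) (α β : Fin (n + 1) → K) (hβ : ∀ i, β i ≠ 0)
    (lam : K) :
    (∏ i, β i) * trace (monodromy n α β lam) =
      trace (descProd (fun k => !![0, (-β k) ^ 2; -1, lam - α k]) (n + 1)) := by
  set S : ℕ → Matrix (Fin 2) (Fin 2) K := fun k => !![0, β k; -β (k - 1), lam - α k]
  have htransfer : ∀ i : Fin (n + 1), !![0, 1; -β (i - 1) / β i, (lam - α i) / β i] =
      (β (i : ℕ))⁻¹ • S i := fun i => by
    ext a b
    fin_cases a <;> fin_cases b <;> simp [S, Fin.cast_val_eq_self, hβ i, div_eq_inv_mul]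
  set V : ℕ → Matrix (Fin 2) (Fin 2) K := fun k => !![0, β k; -1, lam - α k]
  set W : ℕ → Matrix (Fin 2) (Fin 2) K := fun k => !![β k, 0; 0, 1]
  have h₀ : S 0 = V 0 * W n := by
    have hprev : (-1 : Fin (n + 1)) = Fin.last n := by rw [neg_eq_iff_eq_neg, Fin.neg_last]
    ext a b
    fin_cases a <;> fin_cases b <;> simp [S, V, W, hprev]
  have hS : ∀ k, S (k + 1) = V (k + 1) * W k := fun k => by
    ext a b
    fin_cases a <;> fin_cases b <;> simp [S, V, W]
  simp_rw [monodromy, htransfer]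
  rw [prod_reverse_ofFn_eq_descProd (fun k => (β k)⁻¹ • S k), descProd_smul, trace_smul,
    trace_descProd_regroup V W S n h₀ hS, smul_eq_mul, ← mul_assoc,
    ← Fin.prod_univ_eq_prod_range (fun k => (β k)⁻¹), ← prod_mul_distrib,
    prod_eq_one fun i _ => by rw [Fin.cast_val_eq_self, mul_inv_cancel₀ (hβ i)], one_mul]
  congr 2
  ext1 k
  simp [W, V, sq]

end Monodromy

/-- The Hill formula for a `q × q` periodic Jacobi matrix (`q = m + 3 ≥ 3`) with
negative off-diagonal entries: `det(J - λI) = (-1)^q β₀⋯β_{q-1} (tr M(λ) - 2)`,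
where `M(λ)` is the product of the transfer matrices
`[[0,1],[-β_{i-1}/β_i, (λ-α_i)/β_i]]` (indices mod `q`, last factor leftmost). -/
theorem hill_formula (m : ℕ) (α β : Fin (m + 3) → ℝ) (hβ : ∀ i, β i < 0)
    (J : Matrix (Fin (m + 3)) (Fin (m + 3)) ℝ)
    (hJ : J = Matrix.of fun i j =>
      if i = j then α i
      else if j = i + 1 then β i
      else if i = j + 1 then β j
      else 0)
    (M : ℝ → Matrix (Fin 2) (Fin 2) ℝ)
    (hM : ∀ lam : ℝ, M lam =
      ((List.ofFn fun i : Fin (m + 3) =>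
        (!![0, 1; -β (i - 1) / β i, (lam - α i) / β i] :
          Matrix (Fin 2) (Fin 2) ℝ)).reverse).prod) :
    ∀ lam : ℝ,
      (J - lam • (1 : Matrix (Fin (m + 3)) (Fin (m + 3)) ℝ)).det =
        (-1) ^ (m + 3) * (∏ i, β i) * ((M lam).trace - 2) := by
  intro lam
  have htrace := prod_mul_trace_monodromy (m + 2) α β (fun i => (hβ i).ne) lam
  rw [show monodromy (m + 2) α β lam = M lam from (hM lam).symm,
    trace_descProd_continuant] at htrace
  open Fin.NatCast in
  have hprod : ∏ k ∈ range (m + 3), -β k = (-1) ^ (m + 3) * ∏ i, β i := by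
    rw [prod_neg, card_range, ← Fin.prod_univ_eq_prod_range (fun k => β k)]
    simp only [Fin.cast_val_eq_self]
  have hsign : (-1 : ℝ) ^ m * (-1) ^ (m + 3) = -1 := by
    rw [← pow_add]
    exact Odd.neg_one_pow ⟨m + 1, by ring⟩
  rw [hJ, sub_smul_one_eq_neg_periodicJacobiMatrix, det_neg, Fintype.card_fin,
    det_periodicJacobiMatrix, hprod]
  linear_combination (-(-1) ^ (m + 3)) * htrace + 2 * (-1) ^ (m + 3) * (∏ i, β i) * hsign
end
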